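/- arXiv:1105.2946 — 3 statements merged into one kernel-verified Lean document; each statement's English description precedes it below -/
import Mathlib

section
/- Let E ⊆ ℝ be bounded with upper Minkowski dimension strictly greater than 1/2. Then the set Q(E) = {(a−b)/(c−d) : a,b,c,d ∈ E, c ≠ d} is dense in ℝ. -/
open Set Filter Bornology Metric

/-- Minimal number of closed balls of radius `r` needed to cover `E`. -/
noncomputable def coverNum {X : Type*} [PseudoMetricSpace X] (E : Set X) (r : ℝ) : ℕ :=
  sInf {n : ℕ | ∃ s : Finset X, s.card = n ∧ E ⊆ ⋃ x ∈ s, Metric.closedBall x r}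

/-- Upper Minkowski (box-counting) dimension:
`limsup_{r → 0⁺} log N(E,r) / log (1/r)`. -/
noncomputable def udim {X : Type*} [PseudoMetricSpace X] (E : Set X) : ℝ :=
  Filter.limsup (fun r : ℝ => Real.log (coverNum E r) / Real.log (1 / r))
    (nhdsWithin 0 (Set.Ioi 0))

/-- The set of quotients of differences of elements of `E`. -/
def Q (E : Set ℝ) : Set ℝ :=
  {q | ∃ a ∈ E, ∃ b ∈ E, ∃ c ∈ E, ∃ d ∈ E, c ≠ d ∧ q = (a - b) / (c - d)}

private lemma abs_sub_lt_of_floor_div_eq {δ x y : ℝ} (hδ : 0 < δ)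
    (h : ⌊x / δ⌋ = ⌊y / δ⌋) : |x - y| < δ := by
  have h1 : (⌊x / δ⌋ : ℝ) ≤ x / δ := Int.floor_le _
  have h2 : x / δ < ⌊x / δ⌋ + 1 := Int.lt_floor_add_one _
  have h3 : (⌊y / δ⌋ : ℝ) ≤ y / δ := Int.floor_le _
  have h4 : y / δ < ⌊y / δ⌋ + 1 := Int.lt_floor_add_one _
  rw [h] at h1 h2
  rw [abs_sub_lt_iff]
  constructor
  · have hxy : (x - y) / δ < 1 := by rw [sub_div]; linarith
    rwa [div_lt_one hδ] at hxy
  · have hyx : (y - x) / δ < 1 := by rw [sub_div]; linarith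
    rwa [div_lt_one hδ] at hyx

/-- Core pigeonhole bound: an `r`-separated finite set whose difference quotients
avoid `(u,v)` has cardinality at most `C/√r`. -/
private lemma core_card_bound {u v s r : ℝ} (hu : 0 < u) (huv : u < v) (hvu : v ≤ u + 1)
    (hr : 0 < r) (hr1 : r ≤ 1) (hs : 0 < s)
    (P : Finset ℝ) (hPs : ∀ p ∈ P, |p| ≤ s)
    (hsep : ∀ a ∈ P, ∀ b ∈ P, a ≠ b → r < |a - b|)
    (havoid : ∀ a ∈ P, ∀ b ∈ P, ∀ c ∈ P, ∀ d ∈ P, c ≠ d →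
      (a - b) / (c - d) ∉ Set.Ioo u v) :
    (P.card : ℝ) ^ 2 ≤ (4 * (1 + v) * s / (v - u) + 2) / r := by
  have hvu0 : 0 < v - u := by linarith
  set t : ℝ := (u + v) / 2 with htdef
  have ht0 : 0 < t := by rw [htdef]; linarith
  set δ : ℝ := (v - u) * r / 2 with hδdef
  have hδ : 0 < δ := by rw [hδdef]; positivity
  set R : ℝ := (1 + t) * s with hRdef
  have hR : 0 < R := by rw [hRdef]; positivity
  set F : ℝ × ℝ → ℤ := fun p => ⌊(p.1 - t * p.2) / δ⌋ with hF
  have habsR : ∀ a ∈ P, ∀ c ∈ P, |a - t * c| ≤ R := by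
    intro a ha c hc
    have h1 : |a - t * c| ≤ |a| + |t * c| := abs_sub _ _
    have h2 : |t * c| = t * |c| := by rw [abs_mul, abs_of_pos ht0]
    have h3 := hPs a ha
    have h4 := hPs c hc
    rw [hRdef]
    nlinarith
  have hmaps : ∀ p ∈ P ×ˢ P, F p ∈ Finset.Icc ⌊-R / δ⌋ ⌊R / δ⌋ := by
    rintro ⟨a, c⟩ hp
    rw [Finset.mem_product] at hp
    have h1 := habsR a hp.1 c hp.2
    rw [Finset.mem_Icc]
    constructor
    · apply Int.floor_mono
      have h2 : -R ≤ a - t * c := by have := (abs_le.mp h1).1; linarith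
      gcongr
    · apply Int.floor_mono
      have h2 : a - t * c ≤ R := (abs_le.mp h1).2
      gcongr
  have hinj : Set.InjOn F (P ×ˢ P : Finset (ℝ × ℝ)) := by
    rintro ⟨a, c⟩ hp ⟨b, d⟩ hq hFeq
    simp only [Finset.coe_product, Set.mem_prod, Finset.mem_coe] at hp hq
    have hlt : |(a - t * c) - (b - t * d)| < δ := abs_sub_lt_of_floor_div_eq hδ hFeq
    by_cases hcd : c = d
    · subst hcd
      have hab : a = b := by
        by_contra hab
        have h5 := hsep a hp.1 b hq.1 hab
        have h6 : (a - t * c) - (b - t * c) = a - b := by ring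
        rw [h6] at hlt
        have hδr : δ ≤ r := by rw [hδdef]; nlinarith
        linarith
      rw [hab]
    · exfalso
      have hcd0 : c - d ≠ 0 := sub_ne_zero.mpr hcd
      have hrcd : r < |c - d| := hsep c hp.2 d hq.2 hcd
      have hkey : |(a - b) - t * (c - d)| < δ := by
        have h6 : (a - t * c) - (b - t * d) = (a - b) - t * (c - d) := by ring
        rwa [h6] at hlt
      have hq1 : |(a - b) / (c - d) - t| < (v - u) / 2 := by
        have e1 : (a - b) / (c - d) - t = ((a - b) - t * (c - d)) / (c - d) := by
          field_simp
        rw [e1, abs_div, div_lt_div_iff₀ (abs_pos.mpr hcd0) (by norm_num : (0:ℝ) < 2)]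
        rw [hδdef] at hkey
        nlinarith [abs_nonneg ((a - b) - t * (c - d))]
      rw [abs_sub_lt_iff] at hq1
      have hmem : (a - b) / (c - d) ∈ Set.Ioo u v := by
        constructor
        · rw [htdef] at hq1; linarith [hq1.2]
        · rw [htdef] at hq1; linarith [hq1.1]
      exact havoid a hp.1 b hq.1 c hp.2 d hq.2 hcd hmem
  have hcard : (P ×ˢ P).card ≤ (Finset.Icc (⌊-R / δ⌋) (⌊R / δ⌋)).card :=
    Finset.card_le_card_of_injOn F hmaps hinj
  have hIcc : ((Finset.Icc (⌊-R / δ⌋) (⌊R / δ⌋)).card : ℝ) ≤ 2 * R / δ + 2 := by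
    have hm : ⌊-R / δ⌋ ≤ ⌊R / δ⌋ := by
      apply Int.floor_mono
      have : -R ≤ R := by linarith
      gcongr
    have hnn : (0 : ℤ) ≤ ⌊R / δ⌋ + 1 - ⌊-R / δ⌋ := by omega
    have e1 : (⌊R / δ⌋ : ℝ) ≤ R / δ := Int.floor_le _
    have e2 : -R / δ - 1 < (⌊-R / δ⌋ : ℝ) := Int.sub_one_lt_floor _
    have e3 : -R / δ = -(R / δ) := neg_div _ _
    have hcardZ : ((Finset.Icc (⌊-R / δ⌋) (⌊R / δ⌋)).card : ℤ) = ⌊R / δ⌋ + 1 - ⌊-R / δ⌋ := by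
      rw [Int.card_Icc]; exact Int.toNat_of_nonneg hnn
    have hcardR : ((Finset.Icc (⌊-R / δ⌋) (⌊R / δ⌋)).card : ℝ)
        = (⌊R / δ⌋ : ℝ) + 1 - (⌊-R / δ⌋ : ℝ) := by exact_mod_cast hcardZ
    rw [hcardR]
    have e4 : 2 * R / δ = R / δ + R / δ := by ring
    linarith
  have hPP : ((P ×ˢ P).card : ℝ) = (P.card : ℝ) ^ 2 := by
    rw [Finset.card_product]; push_cast; ring
  have hfinal : 2 * R / δ + 2 ≤ (4 * (1 + v) * s / (v - u) + 2) / r := by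
    have e1 : 2 * R / δ = 4 * (1 + t) * s / ((v - u) * r) := by
      rw [hRdef, hδdef]; field_simp; ring
    have e2 : (4 * (1 + v) * s / (v - u) + 2) / r = 4 * (1 + v) * s / ((v - u) * r) + 2 / r := by
      rw [add_div, div_div]
    rw [e1, e2]
    have h2r : (2 : ℝ) ≤ 2 / r := by rw [le_div_iff₀ hr]; linarith
    have htv : t ≤ v := by rw [htdef]; linarith
    have hnum : 4 * (1 + t) * s / ((v - u) * r) ≤ 4 * (1 + v) * s / ((v - u) * r) := by
      gcongr
    linarith
  calc (P.card : ℝ) ^ 2 = ((P ×ˢ P).card : ℝ) := hPP.symm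
    _ ≤ ((Finset.Icc (⌊-R / δ⌋) (⌊R / δ⌋)).card : ℝ) := by exact_mod_cast hcard
    _ ≤ 2 * R / δ + 2 := hIcc
    _ ≤ _ := hfinal

/-- If `Q E` avoids `(u,v)`, then `coverNum E r ≤ B/√r`. -/
private lemma coverNum_le_of_avoid {E : Set ℝ} {u v s : ℝ} (hu : 0 < u) (huv : u < v)
    (hvu : v ≤ u + 1) (hs : 0 < s) (hEs : ∀ x ∈ E, |x| ≤ s)
    (hQ : ∀ q ∈ Q E, q ∉ Set.Ioo u v) {r : ℝ} (hr : 0 < r) (hr1 : r ≤ 1) :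
    (coverNum E r : ℝ) ≤ Real.sqrt (4 * (1 + v) * s / (v - u) + 2) / Real.sqrt r := by
  have hvu0 : 0 < v - u := by linarith
  set A : ℝ := 4 * (1 + v) * s / (v - u) + 2 with hA
  have hv0 : 0 < v := lt_trans hu huv
  have h1v : 0 < 1 + v := by linarith
  have hA0 : 0 ≤ A := by rw [hA]; positivity
  have havoidE : ∀ a ∈ E, ∀ b ∈ E, ∀ c ∈ E, ∀ d ∈ E, c ≠ d →
      (a - b) / (c - d) ∉ Set.Ioo u v := by
    intro a ha b hb c hc d hd hcd
    exact hQ _ ⟨a, ha, b, hb, c, hc, d, hd, hcd, rfl⟩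
  have hbound : ∀ P : Finset ℝ, ↑P ⊆ E → (∀ a ∈ P, ∀ b ∈ P, a ≠ b → r < |a - b|) →
      (P.card : ℝ) ≤ Real.sqrt (A / r) := by
    intro P hPE hsep
    have h1 : (P.card : ℝ) ^ 2 ≤ A / r := by
      rw [hA]
      exact core_card_bound hu huv hvu hr hr1 hs P
        (fun p hp => hEs p (hPE hp)) hsep
        (fun a ha b hb c hc d hd hcd =>
          havoidE a (hPE ha) b (hPE hb) c (hPE hc) d (hPE hd) hcd)
    calc (P.card : ℝ) = Real.sqrt ((P.card : ℝ) ^ 2) := (Real.sqrt_sq (by positivity)).symm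
      _ ≤ Real.sqrt (A / r) := Real.sqrt_le_sqrt h1
  -- maximal separated set via Zorn
  set S : Set (Set ℝ) := {A' | A' ⊆ E ∧ ∀ a ∈ A', ∀ b ∈ A', a ≠ b → r < |a - b|} with hS
  obtain ⟨P, hPmax⟩ := zorn_subset S (by
    intro c hcS hchain
    refine ⟨⋃₀ c, ⟨?_, ?_⟩, fun s0 hs0 => subset_sUnion_of_mem hs0⟩
    · exact sUnion_subset fun s0 hs0 => (hcS hs0).1
    · rintro a ⟨s1, hs1, ha⟩ b ⟨s2, hs2, hb⟩ hab
      rcases hchain.total hs1 hs2 with h | h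
      · exact (hcS hs2).2 a (h ha) b hb hab
      · exact (hcS hs1).2 a ha b (h hb) hab)
  have hPE : P ⊆ E := hPmax.prop.1
  have hPsep : ∀ a ∈ P, ∀ b ∈ P, a ≠ b → r < |a - b| := hPmax.prop.2
  have hPfin : P.Finite := by
    by_contra hinf
    obtain ⟨T, hTP, hTcard⟩ :=
      Set.Infinite.exists_subset_card_eq hinf (⌈Real.sqrt (A / r)⌉₊ + 1)
    have h1 := hbound T (fun x hx => hPE (hTP hx))
      (fun a ha b hb hab => hPsep a (hTP ha) b (hTP hb) hab)
    rw [hTcard] at h1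
    have h2 : Real.sqrt (A / r) < ((⌈Real.sqrt (A / r)⌉₊ + 1 : ℕ) : ℝ) := by
      push_cast
      linarith [Nat.le_ceil (Real.sqrt (A / r))]
    linarith
  have hcover : E ⊆ ⋃ x ∈ hPfin.toFinset, Metric.closedBall x r := by
    intro e he
    by_cases hex : ∃ p ∈ P, |e - p| ≤ r
    · obtain ⟨p, hp, hpe⟩ := hex
      refine Set.mem_biUnion (hPfin.mem_toFinset.mpr hp) ?_
      rw [Metric.mem_closedBall, Real.dist_eq]
      exact hpe
    · push_neg at hex
      exfalso
      have heP : e ∉ P := by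
        intro h
        have := hex e h
        simp only [sub_self, abs_zero] at this
        linarith
      have hins : insert e P ∈ S := by
        constructor
        · exact Set.insert_subset he hPE
        · intro a ha b hb hab
          rcases Set.mem_insert_iff.mp ha with rfl | ha'
          · rcases Set.mem_insert_iff.mp hb with rfl | hb'
            · exact absurd rfl hab
            · exact hex b hb'
          · rcases Set.mem_insert_iff.mp hb with rfl | hb'
            · rw [abs_sub_comm]; exact hex a ha'
            · exact hPsep a ha' b hb' hab
      have := hPmax.2 hins (Set.subset_insert e P)
      exact heP (this (Set.mem_insert e P))
  have hle : coverNum E r ≤ hPfin.toFinset.card :=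
    Nat.sInf_le ⟨hPfin.toFinset, rfl, hcover⟩
  have h2 : (hPfin.toFinset.card : ℝ) ≤ Real.sqrt (A / r) := by
    apply hbound
    · intro x hx
      exact hPE (hPfin.mem_toFinset.mp hx)
    · intro a ha b hb hab
      exact hPsep a (hPfin.mem_toFinset.mp ha) b (hPfin.mem_toFinset.mp hb) hab
  calc (coverNum E r : ℝ) ≤ (hPfin.toFinset.card : ℝ) := by exact_mod_cast hle
    _ ≤ Real.sqrt (A / r) := h2
    _ = Real.sqrt A / Real.sqrt r := Real.sqrt_div hA0 r

/-- If `Q E` avoids an interval `(u,v)` with `0 < u < v ≤ u+1`, then `udim E ≤ 1/2`. -/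
private lemma udim_le_half {E : Set ℝ} (hE : IsBounded E) {u v : ℝ} (hu : 0 < u)
    (huv : u < v) (hvu : v ≤ u + 1) (hQ : ∀ q ∈ Q E, q ∉ Set.Ioo u v) :
    udim E ≤ 1 / 2 := by
  have hvu0 : 0 < v - u := by linarith
  obtain ⟨C, hC⟩ := isBounded_iff_forall_norm_le.mp hE
  set s : ℝ := max C 1 with hsdef
  have hs : 0 < s := lt_of_lt_of_le one_pos (le_max_right _ _)
  have hEs : ∀ x ∈ E, |x| ≤ s := by
    intro x hx
    calc |x| = ‖x‖ := (Real.norm_eq_abs x).symm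
      _ ≤ C := hC x hx
      _ ≤ s := le_max_left _ _
  set B : ℝ := Real.sqrt (4 * (1 + v) * s / (v - u) + 2) with hB
  have hv0 : 0 < v := lt_trans hu huv
  have h1v : 0 < 1 + v := by linarith
  have hB1 : 1 ≤ B := by
    have hApos : 0 ≤ 4 * (1 + v) * s / (v - u) := by positivity
    have h9 : (0 : ℝ) ≤ 4 * (1 + v) * s / (v - u) + 2 := by linarith
    have h10 := Real.sq_sqrt h9
    have h11 := Real.sqrt_nonneg (4 * (1 + v) * s / (v - u) + 2)
    rw [hB]
    nlinarith
  have hB0 : 0 < B := lt_of_lt_of_le one_pos hB1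
  have hlogB : 0 ≤ Real.log B := Real.log_nonneg hB1
  have key : ∀ η : ℝ, 0 < η → udim E ≤ 1 / 2 + η := by
    intro η hη
    unfold udim
    set r₂ : ℝ := min (Real.exp (-(Real.log B) / η)) 1 with hr₂
    have hr₂0 : 0 < r₂ := lt_min (Real.exp_pos _) one_pos
    apply Filter.limsup_le_of_le
    · -- coboundedness: the function is frequently ≥ 0
      apply Filter.IsCoboundedUnder.of_frequently_ge (a := 0)
      apply Filter.Eventually.frequently
      filter_upwards [Ioo_mem_nhdsGT_of_mem
        (show (0 : ℝ) ∈ Set.Ico 0 1 from ⟨le_refl _, one_pos⟩)] with r hrmem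
      have hr0 : 0 < r := hrmem.1
      have h1r : 1 < 1 / r := by rw [lt_div_iff₀ hr0]; linarith [hrmem.2]
      apply div_nonneg
      · rcases Nat.eq_zero_or_pos (coverNum E r) with hN | hN
        · rw [hN]; simp
        · exact Real.log_nonneg (by exact_mod_cast hN)
      · exact le_of_lt (Real.log_pos h1r)
    · filter_upwards [Ioo_mem_nhdsGT_of_mem
        (show (0 : ℝ) ∈ Set.Ico 0 r₂ from ⟨le_refl _, hr₂0⟩)] with r hrmem
      obtain ⟨hr0, hrr₂⟩ := hrmem
      have hrlt1 : r < 1 := lt_of_lt_of_le hrr₂ (min_le_right _ _)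
      have hr1 : r ≤ 1 := le_of_lt hrlt1
      have h1r : 1 < 1 / r := by rw [lt_div_iff₀ hr0]; linarith
      have hL : 0 < Real.log (1 / r) := Real.log_pos h1r
      rcases Nat.eq_zero_or_pos (coverNum E r) with hN | hN
      · rw [hN]
        simp only [Nat.cast_zero, Real.log_zero, zero_div]
        linarith
      · have hN1 : (1 : ℝ) ≤ (coverNum E r : ℝ) := by exact_mod_cast hN
        have hcov := coverNum_le_of_avoid hu huv hvu hs hEs hQ hr0 hr1
        rw [← hB] at hcov
        have hsq : 0 < Real.sqrt r := Real.sqrt_pos.mpr hr0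
        have hlog1 : Real.log (coverNum E r) ≤ Real.log (B / Real.sqrt r) :=
          Real.log_le_log (by linarith) hcov
        have hlog2 : Real.log (B / Real.sqrt r) = Real.log B + Real.log (1 / r) / 2 := by
          rw [Real.log_div (ne_of_gt hB0) (ne_of_gt hsq), Real.log_sqrt (le_of_lt hr0),
            one_div, Real.log_inv]
          ring
        have hrexp : r ≤ Real.exp (-(Real.log B) / η) :=
          le_of_lt (lt_of_lt_of_le hrr₂ (min_le_left _ _))
        have hLlb : Real.log B / η ≤ Real.log (1 / r) := by
          have h7 := Real.log_le_log hr0 hrexp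
          rw [Real.log_exp] at h7
          rw [one_div, Real.log_inv]
          have : Real.log B / η = -(-(Real.log B) / η) := by ring
          rw [this]
          linarith
        rw [div_le_iff₀ hL]
        have h8 : Real.log B ≤ η * Real.log (1 / r) := by
          have := (div_le_iff₀ hη).mp hLlb
          linarith [mul_comm (Real.log (1 / r)) η]
        calc Real.log (coverNum E r) ≤ Real.log B + Real.log (1 / r) / 2 := by
              rw [← hlog2]; exact hlog1
          _ ≤ η * Real.log (1 / r) + Real.log (1 / r) / 2 := by linarith
          _ = (1 / 2 + η) * Real.log (1 / r) := by ring
  exact le_of_forall_pos_le_add key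

theorem stmt3 (E : Set ℝ) (hE : IsBounded E) (hdim : udim E > 1 / 2) :
    Dense (Q E) := by
  have hnegQ : ∀ q ∈ Q E, -q ∈ Q E := by
    rintro q ⟨a, ha, b, hb, c, hc, d, hd, hcd, rfl⟩
    exact ⟨b, hb, a, ha, c, hc, d, hd, hcd, by ring⟩
  rw [Metric.dense_iff]
  intro x ε hε
  by_contra hempty
  rw [Set.not_nonempty_iff_eq_empty] at hempty
  have hno : ∀ q ∈ Q E, q ∉ Metric.ball x ε := by
    intro q hq hmem
    have : q ∈ (∅ : Set ℝ) := hempty ▸ Set.mem_inter hmem hq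
    exact this
  set η : ℝ := min ε 1 with hηdef
  have hη0 : 0 < η := lt_min hε one_pos
  have hη1 : η ≤ 1 := min_le_right _ _
  have hηε : η ≤ ε := min_le_left _ _
  have contra : ∀ u' v' : ℝ, 0 < u' → u' < v' → v' ≤ u' + 1 →
      (∀ q ∈ Q E, q ∉ Set.Ioo u' v') → False := by
    intro u' v' h1 h2 h3 h4
    have := udim_le_half hE h1 h2 h3 h4
    linarith
  rcases lt_or_ge (|x|) ε with hx | hx
  · by_cases h2pt : ∃ c ∈ E, ∃ d ∈ E, c ≠ d
    · obtain ⟨c, hc, d, hd, hcd⟩ := h2pt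
      have h0Q : (0 : ℝ) ∈ Q E := ⟨c, hc, c, hc, c, hc, d, hd, hcd, by simp⟩
      apply hno 0 h0Q
      rw [Metric.mem_ball, Real.dist_eq, zero_sub, abs_neg]
      exact hx
    · apply contra 1 2 one_pos one_lt_two (by norm_num)
      intro q hq _
      obtain ⟨a, _, b, _, c, hc, d, hd, hcd, _⟩ := hq
      exact h2pt ⟨c, hc, d, hd, hcd⟩
  · rcases le_or_gt 0 x with hx0 | hx0
    · have hxε : ε ≤ x := by rwa [abs_of_nonneg hx0] at hx
      apply contra (x - η / 2) x (by linarith) (by linarith) (by linarith)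
      intro q hq hmem
      apply hno q hq
      rw [Metric.mem_ball, Real.dist_eq]
      obtain ⟨hq1, hq2⟩ := hmem
      have habs : |q - x| < η / 2 := abs_lt.mpr ⟨by linarith, by linarith⟩
      linarith
    · have hxε : ε ≤ -x := by rw [abs_of_neg hx0] at hx; exact hx
      apply contra (-x - η / 2) (-x) (by linarith) (by linarith) (by linarith)
      intro q hq hmem
      apply hno (-q) (hnegQ q hq)
      rw [Metric.mem_ball, Real.dist_eq]
      obtain ⟨hq1, hq2⟩ := hmem
      have habs : |(-q) - x| < η / 2 := abs_lt.mpr ⟨by linarith, by linarith⟩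
      linarith
end

section
/- Let E ⊆ ℝ² be bounded with upper Minkowski dimension strictly greater than 1. Then the set of slopes of nonvertical lines connecting pairs of distinct points of E, namely {(b₂−a₂)/(b₁−a₁) : (a₁,a₂),(b₁,b₂) ∈ E, a₁ ≠ b₁}, is dense in ℝ. -/
/-!
If the slopes of `E` missed an interval `(s - ε, s + ε)`, then every chord of `E` would be either
vertical or steep with respect to `s`, so `φ z = im z - s * re z` satisfies
`|a - b| ≤ K * |φ a - φ b|` on `E` with `K = 1 + (1 + |s|) / ε`. Cutting the bounded interval
`φ '' E` into pieces of length `r / K` then covers `E` by `O(1 / r)` balls of radius `r`, so the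
upper Minkowski dimension of `E` would be at most `1`.
-/

open Set Filter Bornology Metric

open scoped Topology

section CoveringNumbers

variable {X : Type*} [PseudoMetricSpace X] {E : Set X} {r : ℝ}

lemma coverNum_le_card {s : Finset X} (h : E ⊆ ⋃ x ∈ s, closedBall x r) : coverNum E r ≤ s.card :=
  Nat.sInf_le ⟨s, rfl, h⟩

lemma coverNum_le_card_of_subset_biUnion {ι : Type*} (s : Finset ι) (A : ι → Set X)
    (hcover : E ⊆ ⋃ i ∈ s, A i) (hsmall : ∀ i ∈ s, ∀ x ∈ E ∩ A i, ∀ y ∈ E ∩ A i, dist x y ≤ r) :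
    coverNum E r ≤ s.card := by
  classical
  let t := s.filter fun i => (E ∩ A i).Nonempty
  let center : t → X := fun i => (Finset.mem_filter.1 i.2).2.some
  refine (coverNum_le_card (s := t.attach.image center) ?_).trans
    (Finset.card_image_le.trans ((Finset.card_attach).trans_le (Finset.card_filter_le _ _)))
  intro x hx
  obtain ⟨i, hi, hxi⟩ := mem_iUnion₂.1 (hcover hx)
  have hit : i ∈ t := Finset.mem_filter.2 ⟨hi, x, hx, hxi⟩
  refine mem_iUnion₂.2 ⟨center ⟨i, hit⟩, Finset.mem_image_of_mem _ (Finset.mem_attach _ _), ?_⟩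
  exact mem_closedBall.2 (hsmall i hi x ⟨hx, hxi⟩ _ (Finset.mem_filter.1 hit).2.some_mem)

lemma coverNum_le_of_le_mul_dist {φ : X → ℝ} {a b K : ℝ} (hab : a ≤ b) (hK : 0 ≤ K) (hr : 0 < r)
    (hφ : MapsTo φ E (Icc a b))
    (hdist : ∀ x ∈ E, ∀ y ∈ E, dist x y ≤ K * dist (φ x) (φ y)) :
    (coverNum E r : ℝ) ≤ (b - a) * K / r + 1 := by
  -- on a level set of `⌊level⌋₊`, `φ` varies by less than `r / K`
  let level : X → ℝ := fun x => (φ x - a) * (K / r)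
  let N := ⌊(b - a) * K / r⌋₊
  have hlevel : ∀ x ∈ E, 0 ≤ level x ∧ level x ≤ (b - a) * K / r := fun x hx => by
    obtain ⟨hax, hxb⟩ := hφ hx
    rw [mul_div_assoc]
    exact ⟨mul_nonneg (sub_nonneg.2 hax) (by positivity),
      mul_le_mul_of_nonneg_right (by linarith) (by positivity)⟩
  have hsmall : ∀ j ∈ Finset.range (N + 1),
      ∀ x ∈ E ∩ {x | ⌊level x⌋₊ = j}, ∀ y ∈ E ∩ {y | ⌊level y⌋₊ = j}, dist x y ≤ r := by
    rintro j - x ⟨hx, rfl⟩ y ⟨hy, hxy⟩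
    have hfloor : ⌊level x⌋ = ⌊level y⌋ := by
      rw [← Int.natCast_floor_eq_floor (hlevel x hx).1,
        ← Int.natCast_floor_eq_floor (hlevel y hy).1, hxy]
    have hK_dist : K * dist (φ x) (φ y) = r * |level x - level y| := by
      have : level x - level y = (φ x - φ y) * (K / r) := by simp only [level]; ring
      rw [this, Real.dist_eq, abs_mul, abs_of_nonneg (by positivity : 0 ≤ K / r)]
      field_simp
    calc dist x y ≤ K * dist (φ x) (φ y) := hdist x hx y hy
      _ ≤ r := by
        rw [hK_dist]
        exact mul_le_of_le_one_right hr.le (Int.abs_sub_lt_one_of_floor_eq_floor hfloor).le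
  have hcount := coverNum_le_card_of_subset_biUnion (Finset.range (N + 1))
    (fun j => {x | ⌊level x⌋₊ = j}) (fun x hx => mem_iUnion₂.2 ⟨_, Finset.mem_range_succ_iff.2
      (Nat.floor_le_floor (hlevel x hx).2), rfl⟩) hsmall
  rw [Finset.card_range] at hcount
  calc (coverNum E r : ℝ) ≤ (N + 1 : ℕ) := by exact_mod_cast hcount
    _ ≤ (b - a) * K / r + 1 := by
      push_cast
      gcongr
      exact Nat.floor_le (by have := sub_nonneg.2 hab; positivity)

lemma udim_le_of_coverNum_le {C d : ℝ} (hC : 1 ≤ C) (hd : 0 ≤ d)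
    (h : ∀ᶠ r in 𝓝[>] 0, (coverNum E r : ℝ) ≤ C * (1 / r) ^ d) :
    udim E ≤ d := by
  have hlog : Tendsto (fun r : ℝ => Real.log (1 / r)) (𝓝[>] 0) atTop := by
    simp only [one_div, Real.log_inv]
    exact tendsto_neg_atBot_atTop.comp Real.tendsto_log_nhdsGT_zero
  have hbound : Tendsto (fun r => Real.log C / Real.log (1 / r) + d) (𝓝[>] 0) (𝓝 d) := by
    simpa using (tendsto_const_nhds.div_atTop hlog).add_const d
  have hle : ∀ᶠ r in 𝓝[>] 0,
      Real.log (coverNum E r) / Real.log (1 / r) ≤ Real.log C / Real.log (1 / r) + d := by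
    filter_upwards [h, hlog.eventually_gt_atTop 0, self_mem_nhdsWithin] with r hN hL (hr : 0 < r)
    have hlogC : Real.log (C * (1 / r) ^ d) = Real.log C + d * Real.log (1 / r) := by
      rw [Real.log_mul (by positivity) (by positivity), Real.log_rpow (by positivity)]
    rw [div_add' _ _ _ hL.ne', div_le_div_iff_of_pos_right hL, ← hlogC]
    rcases (coverNum E r).eq_zero_or_pos with h0 | h0
    · rw [h0, Nat.cast_zero, Real.log_zero, hlogC]
      have := Real.log_nonneg hC
      positivity
    · exact Real.log_le_log (by exact_mod_cast h0) hN
  have hnonneg : ∀ᶠ r in 𝓝[>] (0 : ℝ), 0 ≤ Real.log (coverNum E r) / Real.log (1 / r) := by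
    filter_upwards [hlog.eventually_gt_atTop 0] with r hL
    exact div_nonneg (Real.log_natCast_nonneg _) hL.le
  calc udim E ≤ limsup (fun r => Real.log C / Real.log (1 / r) + d) (𝓝[>] 0) :=
        limsup_le_limsup hle (isCoboundedUnder_le_of_eventually_le _ hnonneg)
          hbound.isBoundedUnder_le
    _ = d := hbound.limsup_eq

end CoveringNumbers

lemma dist_le_of_slope_notMem_ball {a b : ℂ} {s ε : ℝ} (hε : 0 < ε)
    (h : a.re ≠ b.re → (b.im - a.im) / (b.re - a.re) ∉ ball s ε) :
    dist a b ≤ (1 + (1 + |s|) / ε) * |(a.im - s * a.re) - (b.im - s * b.re)| := by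
  set u := b.re - a.re
  set v := b.im - a.im
  have hw : |(a.im - s * a.re) - (b.im - s * b.re)| = |v - s * u| := by
    rw [← abs_neg]; congr 1; ring
  have hu : ε * |u| ≤ |v - s * u| := by
    rcases eq_or_ne u 0 with hu0 | hu0
    · simp [hu0]
    · have hslope := h fun hre => hu0 (by simp [u, hre])
      rw [mem_ball, Real.dist_eq, not_lt] at hslope
      calc ε * |u| ≤ |v / u - s| * |u| := by gcongr
        _ = |v - s * u| := by rw [← abs_mul, sub_mul, div_mul_cancel₀ _ hu0, mul_comm]
  have hdist : dist a b ≤ |u| + |v| := by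
    rw [dist_comm, Complex.dist_eq]
    simpa using Complex.norm_le_abs_re_add_abs_im (b - a)
  have hv : |v| ≤ |v - s * u| + |s| * |u| := by
    calc |v| = |(v - s * u) + s * u| := by ring_nf
      _ ≤ |v - s * u| + |s| * |u| := by rw [← abs_mul]; exact abs_add_le _ _
  have hu' : (1 + |s|) * |u| ≤ (1 + |s|) / ε * |v - s * u| := by
    calc (1 + |s|) * |u| = (1 + |s|) / ε * (ε * |u|) := by field_simp
      _ ≤ (1 + |s|) / ε * |v - s * u| := by gcongr
  rw [hw]
  linarith

theorem stmt6 (E : Set ℂ) (hE : IsBounded E) (hdim : udim E > 1) :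
    Dense {s : ℝ | ∃ a ∈ E, ∃ b ∈ E, a.re ≠ b.re ∧ s = (b.im - a.im) / (b.re - a.re)} := by
  by_contra hdense
  obtain ⟨s, ε, hε, hgap⟩ : ∃ s ε, 0 < ε ∧ ∀ a ∈ E, ∀ b ∈ E, a.re ≠ b.re →
      (b.im - a.im) / (b.re - a.re) ∉ ball s ε := by
    simp only [Metric.dense_iff, not_forall, not_nonempty_iff_eq_empty] at hdense
    obtain ⟨s, ε, hε, hempty⟩ := hdense
    exact ⟨s, ε, hε, fun a ha b hb hab hmem =>
      hempty.subset ⟨hmem, a, ha, b, hb, hab, rfl⟩⟩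
  set φ : ℂ → ℝ := fun z => z.im - s * z.re
  set K := 1 + (1 + |s|) / ε
  obtain ⟨M, hM, hφM⟩ := ((hE.isCompact_closure.image (by fun_prop : Continuous φ)).isBounded.subset
    (image_mono subset_closure)).exists_pos_norm_le
  have hmaps : MapsTo φ E (Icc (-M) M) := fun z hz => abs_le.1 (hφM _ (mem_image_of_mem φ hz))
  refine (udim_le_of_coverNum_le (C := 2 * M * K + 1)
    (le_add_of_nonneg_left (by positivity)) zero_le_one ?_).not_gt hdim
  filter_upwards [Ioo_mem_nhdsGT one_pos] with r ⟨hr0, hr1⟩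
  calc (coverNum E r : ℝ) ≤ (M - -M) * K / r + 1 :=
        coverNum_le_of_le_mul_dist (by linarith) (by positivity) hr0 hmaps fun a ha b hb =>
          dist_le_of_slope_notMem_ball hε (hgap a ha b hb)
    _ ≤ (2 * M * K + 1) * (1 / r) ^ (1 : ℝ) := by
        rw [Real.rpow_one, add_mul, one_mul, mul_one_div, show M - -M = 2 * M by ring]
        gcongr
        exact one_le_one_div hr0 hr1.le
end

section
/- Let E ⊆ ℝ be compact, nonempty, and with empty interior. Then the set A of left endpoints of the complementary intervals of E (i.e., points a ∈ E such that some open interval (a, a+ε) is disjoint from E) is dense in E. -/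
open Set Filter Bornology Metric

theorem stmt8 (E : Set ℝ) (hE : IsCompact E) (hne : E.Nonempty)
    (hint : interior E = ∅) :
    E ⊆ closure {a ∈ E | ∃ ε > 0, Set.Ioo a (a + ε) ∩ E = ∅} := by
  intro x hx
  rw [Metric.mem_closure_iff]
  intro δ hδ
  -- find y ∈ (x, x+δ) not in E
  have hsub : ¬ (Set.Ioo x (x + δ) ⊆ E) := by
    intro h
    have : Set.Ioo x (x + δ) ⊆ interior E :=
      interior_maximal h isOpen_Ioo
    rw [hint, Set.subset_empty_iff, Set.eq_empty_iff_forall_notMem] at this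
    exact this (x + δ/2) ⟨by linarith, by linarith⟩
  obtain ⟨y, hy, hyE⟩ : ∃ y ∈ Set.Ioo x (x + δ), y ∉ E := by
    by_contra h
    push_neg at h
    exact hsub h
  set a := sSup (E ∩ Set.Icc x y) with ha
  have hne' : (E ∩ Set.Icc x y).Nonempty := ⟨x, hx, le_refl x, le_of_lt hy.1⟩
  have hcomp : IsCompact (E ∩ Set.Icc x y) := hE.inter_right isClosed_Icc
  have hmem : a ∈ E ∩ Set.Icc x y := hcomp.sSup_mem hne'
  have haE : a ∈ E := hmem.1
  have hxa : x ≤ a := hmem.2.1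
  have hay : a ≤ y := hmem.2.2
  have haylt : a < y := lt_of_le_of_ne hay (fun h => hyE (h ▸ haE))
  refine ⟨a, ⟨haE, y - a, by linarith, ?_⟩, ?_⟩
  · rw [Set.eq_empty_iff_forall_notMem]
    rintro z ⟨⟨hz1, hz2⟩, hzE⟩
    have hzy : z < y := by linarith
    have : z ≤ a := le_csSup hcomp.bddAbove ⟨hzE, by linarith, le_of_lt hzy⟩
    linarith
  · rw [Real.dist_eq, abs_lt]
    constructor <;> [linarith [hy.2]; linarith]
end
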